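/- arXiv:1810.01116 — 3 statements merged into one kernel-verified Lean document; each statement's English description precedes it below -/
import Mathlib

section
/- (Lemma 1, change of variables) For every σ > 0 and every Borel measurable function g : ℝ → [0,∞], one has ∫₀^∞ g(φ_σ(x)) · f_IG(x|σ,σ) · ((1+x)/2) dx = ∫_ℝ g(z) · φ(z) dz, where φ(z) = exp(−z²/2)/√(2π) is the standard normal density. Equivalently, the pushforward under φ_σ of the measure on (0,∞) with density f_IG(x|σ,σ)·(1+x)/2 is the standard Gaussian measure on ℝ. -/
open MeasureTheory Real Set

/-- Inverse Gaussian density `f_IG(x | γ, δ)`. -/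
noncomputable def fIG (γ δ x : ℝ) : ℝ :=
  δ / Real.sqrt (2 * Real.pi * x ^ 3) * Real.exp (-(γ * x - δ) ^ 2 / (2 * x))

/-- The map `φ_σ(x) = σ (√x − 1/√x)`. -/
noncomputable def phiMap (σ x : ℝ) : ℝ := σ * (Real.sqrt x - 1 / Real.sqrt x)

/-- The inverse map `φ_σ⁻¹(z) = 1 + z²/(2σ²) + (z/σ)√(1 + z²/(4σ²))`. -/
noncomputable def phiInv (σ z : ℝ) : ℝ :=
  1 + z ^ 2 / (2 * σ ^ 2) + z / σ * Real.sqrt (1 + z ^ 2 / (4 * σ ^ 2))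

/-- Standard normal density `φ(z) = exp(−z²/2)/√(2π)`. -/
noncomputable def stdNormalPdf (z : ℝ) : ℝ := Real.exp (-z ^ 2 / 2) / Real.sqrt (2 * Real.pi)

/-- Standard normal cumulative distribution function. -/
noncomputable def stdNormalCDF (z : ℝ) : ℝ := ∫ t in Set.Iic z, stdNormalPdf t

/-- Modified Bessel function of the second kind `K_p(z)` (integral representation). -/
noncomputable def besselK (p z : ℝ) : ℝ :=
  (1 / 2) * ∫ t in Set.Ioi (0 : ℝ), t ^ (p - 1) * Real.exp (-z * (t + 1 / t) / 2)

/-- Generalized inverse Gaussian density `f_GIG(x | γ, δ, p)`. -/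
noncomputable def fGIG (γ δ p x : ℝ) : ℝ :=
  (γ / δ) ^ p * x ^ (p - 1) / (2 * besselK p (γ * δ)) *
    Real.exp (-(γ ^ 2 * x + δ ^ 2 / x) / 2)

/-- Generalized hyperbolic density `f_GH(y | μ, β, γ, δ, p)` with `α = √(β² + γ²)`. -/
noncomputable def fGH (μ β γ δ p y : ℝ) : ℝ :=
  Real.sqrt (Real.sqrt (β ^ 2 + γ ^ 2)) *
      (γ / (Real.sqrt (β ^ 2 + γ ^ 2) * δ)) ^ p /
      (Real.sqrt (2 * Real.pi) * besselK p (δ * γ)) *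
    Real.exp (β * (y - μ)) *
    besselK (p - 1 / 2) (Real.sqrt (β ^ 2 + γ ^ 2) * Real.sqrt (δ ^ 2 + (y - μ) ^ 2)) /
    (δ ^ 2 + (y - μ) ^ 2) ^ ((1 - 2 * p) / 4)

/-! Writing `x = t²`, the map `φ_σ` becomes `t ↦ σ (t - 1/t)`, and `(σx - σ)² / x = φ_σ(x)²`, so
`f_IG(x|σ,σ) (1+x)/2` is exactly the Jacobian `φ_σ'(x) = σ(1+x)/(2x√x)` times `φ(φ_σ(x))`.
As `φ_σ` maps `(0,∞)` monotonically onto `ℝ` (with inverse `phiInv σ`), the claim is the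
one-dimensional change of variables formula. -/

lemma phiMap_sq {σ x : ℝ} (hx : 0 < x) : phiMap σ x ^ 2 = (σ * x - σ) ^ 2 / x := by
  obtain ⟨r, hr, rfl⟩ : ∃ r, 0 < r ∧ x = r ^ 2 :=
    ⟨√x, Real.sqrt_pos.mpr hx, (Real.sq_sqrt hx.le).symm⟩
  rw [phiMap, Real.sqrt_sq hr.le]
  field_simp

lemma hasDerivAt_phiMap (σ : ℝ) {x : ℝ} (hx : 0 < x) :
    HasDerivAt (phiMap σ) (σ * (1 + x) / (2 * x * √x)) x := by
  have hr : 0 < √x := Real.sqrt_pos.mpr hx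
  have hsqrt := Real.hasDerivAt_sqrt hx.ne'
  refine ((hsqrt.sub ((hasDerivAt_const x (1 : ℝ)).div hsqrt hr.ne')).const_mul σ).congr_deriv ?_
  field_simp
  rw [Real.sq_sqrt hx.le]
  ring

lemma monotoneOn_phiMap {σ : ℝ} (hσ : 0 ≤ σ) : MonotoneOn (phiMap σ) (Ioi 0) := by
  intro x hx y _ hxy
  have hsqrt : √x ≤ √y := Real.sqrt_le_sqrt hxy
  have hinv : 1 / √y ≤ 1 / √x := one_div_le_one_div_of_le (Real.sqrt_pos.mpr hx) hsqrt
  exact mul_le_mul_of_nonneg_left (by linarith) hσ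

lemma phiInv_eq_sq (σ z : ℝ) :
    phiInv σ z = (z / (2 * σ) + √(1 + (z / (2 * σ)) ^ 2)) ^ 2 := by
  rw [phiInv, add_sq, Real.sq_sqrt (by positivity), div_pow z (2 * σ), mul_pow,
    show (2 : ℝ) ^ 2 = 4 by norm_num]
  ring

lemma add_sqrt_one_add_sq_pos (a : ℝ) : 0 < a + √(1 + a ^ 2) := by
  have h : |a| < √(1 + a ^ 2) := by
    rw [← Real.sqrt_sq_eq_abs]
    exact Real.sqrt_lt_sqrt (sq_nonneg a) (lt_one_add _)
  linarith [neg_abs_le a]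

lemma phiInv_pos (σ z : ℝ) : 0 < phiInv σ z := by
  rw [phiInv_eq_sq]
  exact pow_pos (add_sqrt_one_add_sq_pos _) 2

lemma phiMap_phiInv {σ : ℝ} (hσ : σ ≠ 0) (z : ℝ) : phiMap σ (phiInv σ z) = z := by
  set a := z / (2 * σ)
  have hpos := add_sqrt_one_add_sq_pos a
  have hdiff : a + √(1 + a ^ 2) - 1 / (a + √(1 + a ^ 2)) = 2 * a := by
    field_simp
    linear_combination Real.sq_sqrt (by positivity : 0 ≤ 1 + a ^ 2)
  rw [phiInv_eq_sq, phiMap, Real.sqrt_sq hpos.le, hdiff]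
  simp only [a]
  field_simp

lemma phiMap_image_Ioi {σ : ℝ} (hσ : σ ≠ 0) : phiMap σ '' Ioi 0 = univ :=
  eq_univ_of_forall fun z => ⟨phiInv σ z, phiInv_pos σ z, phiMap_phiInv hσ z⟩

lemma fIG_mul_eq_deriv_mul_stdNormalPdf {σ x : ℝ} (hx : 0 < x) :
    fIG σ σ x * ((1 + x) / 2) = σ * (1 + x) / (2 * x * √x) * stdNormalPdf (phiMap σ x) := by
  have hr : 0 < √x := Real.sqrt_pos.mpr hx
  have hsqrt : √(2 * π * x ^ 3) = √(2 * π) * (x * √x) := by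
    rw [← Real.sqrt_sq (by positivity : 0 ≤ x * √x), ← Real.sqrt_mul (by positivity), mul_pow,
      Real.sq_sqrt hx.le]
    ring_nf
  rw [fIG, stdNormalPdf, neg_div, neg_div, phiMap_sq hx, hsqrt, div_div, mul_comm x 2]
  field_simp

theorem ig_change_of_variables_general (σ : ℝ) (hσ : 0 < σ) (g : ℝ → ENNReal) :
    ∫⁻ x in Set.Ioi (0 : ℝ), g (phiMap σ x) * ENNReal.ofReal (fIG σ σ x * ((1 + x) / 2)) =
    ∫⁻ z, g z * ENNReal.ofReal (stdNormalPdf z) := by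
  calc ∫⁻ x in Ioi 0, g (phiMap σ x) * ENNReal.ofReal (fIG σ σ x * ((1 + x) / 2))
      = ∫⁻ x in Ioi 0, ENNReal.ofReal (σ * (1 + x) / (2 * x * √x)) *
          (g (phiMap σ x) * ENNReal.ofReal (stdNormalPdf (phiMap σ x))) := by
        refine setLIntegral_congr_fun measurableSet_Ioi fun x (hx : 0 < x) => ?_
        rw [fIG_mul_eq_deriv_mul_stdNormalPdf hx, ENNReal.ofReal_mul (by positivity)]
        ring
    _ = ∫⁻ z in phiMap σ '' Ioi 0, g z * ENNReal.ofReal (stdNormalPdf z) :=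
        (lintegral_image_eq_lintegral_deriv_mul_of_monotoneOn measurableSet_Ioi
          (fun x hx => (hasDerivAt_phiMap σ hx).hasDerivWithinAt) (monotoneOn_phiMap hσ.le)
          fun z => g z * ENNReal.ofReal (stdNormalPdf z)).symm
    _ = ∫⁻ z, g z * ENNReal.ofReal (stdNormalPdf z) := by
        rw [phiMap_image_Ioi hσ.ne', Measure.restrict_univ]

/-- Lemma 1, change of variables: for every Borel measurable
`g : ℝ → [0,∞]`, `∫₀^∞ g(φ_σ(x)) f_IG(x|σ,σ) (1+x)/2 dx = ∫_ℝ g(z) φ(z) dz`. -/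
theorem ig_change_of_variables (σ : ℝ) (hσ : 0 < σ) (g : ℝ → ENNReal)
    (hg : Measurable g) :
    ∫⁻ x in Set.Ioi (0 : ℝ), g (phiMap σ x) * ENNReal.ofReal (fIG σ σ x * ((1 + x) / 2)) =
    ∫⁻ z, g z * ENNReal.ofReal (stdNormalPdf z) :=
  ig_change_of_variables_general σ hσ g
end

section
/- (GH density as a normal variance-mean mixture) For all μ ∈ ℝ, β ∈ ℝ, γ, δ > 0, p ∈ ℝ, setting α = √(β² + γ²), for every y ∈ ℝ one has ∫₀^∞ (1/√(2πx)) · exp(−(y − μ − βx)²/(2x)) · f_GIG(x|γ,δ,p) dx = f_GH(y|μ,β,γ,δ,p), where f_GH(y|μ,β,γ,δ,p) = (√α · (γ/(αδ))^p / (√(2π)·K_p(δγ))) · e^{β(y−μ)} · K_{p−1/2}(α·√(δ² + (y−μ)²)) / (δ² + (y−μ)²)^{(1−2p)/4}. -/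
open MeasureTheory Real Set

/-! Multiplying the normal kernel by the GIG density and completing the square in the exponent
turns the integrand into `e^{β(y-μ)}` times the unnormalised GIG kernel
`x^{(p-1/2)-1} exp(-(α² x + m²/x)/2)` with `m = √(δ² + (y-μ)²)`. The substitution `x = (b/a) t` in
the integral defining `K_q` gives `∫₀^∞ x^{q-1} exp(-(a² x + b²/x)/2) dx = 2 (b/a)^q K_q(ab)`;
it holds for the Bochner integral whether or not it converges, so no integrability argument is
needed. What remains is bookkeeping of real powers. -/

theorem integral_rpow_mul_exp_eq_besselK (q a b : ℝ) (ha : 0 < a) (hb : 0 < b) :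
    ∫ x in Ioi (0 : ℝ), x ^ (q - 1) * exp (-(a ^ 2 * x + b ^ 2 / x) / 2) =
      2 * (b / a) ^ q * besselK q (a * b) := by
  set c := b / a with hc_def
  have hc : 0 < c := div_pos hb ha
  have h_exp (x : ℝ) (hx : x ≠ 0) :
      -(a ^ 2 * (c * x) + b ^ 2 / (c * x)) / 2 = -(a * b) * (x + 1 / x) / 2 := by
    rw [hc_def]; field_simp
  have h_scaled : ∀ x ∈ Ioi (0 : ℝ),
      c * ((c * x) ^ (q - 1) * exp (-(a ^ 2 * (c * x) + b ^ 2 / (c * x)) / 2)) =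
        c ^ q * (x ^ (q - 1) * exp (-(a * b) * (x + 1 / x) / 2)) := by
    intro x hx
    rw [mul_rpow hc.le (le_of_lt hx), h_exp x (ne_of_gt hx), rpow_sub_one hc.ne']
    field_simp
  have h_sub := integral_comp_mul_left_Ioi
    (fun x => x ^ (q - 1) * exp (-(a ^ 2 * x + b ^ 2 / x) / 2)) 0 hc
  simp only [mul_zero, smul_eq_mul] at h_sub
  calc ∫ x in Ioi (0 : ℝ), x ^ (q - 1) * exp (-(a ^ 2 * x + b ^ 2 / x) / 2)
      = ∫ x in Ioi (0 : ℝ),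
          c * ((c * x) ^ (q - 1) * exp (-(a ^ 2 * (c * x) + b ^ 2 / (c * x)) / 2)) := by
        rw [integral_const_mul, h_sub, mul_inv_cancel_left₀ hc.ne']
    _ = c ^ q * ∫ x in Ioi (0 : ℝ), x ^ (q - 1) * exp (-(a * b) * (x + 1 / x) / 2) := by
        rw [setIntegral_congr_fun measurableSet_Ioi h_scaled, integral_const_mul]
    _ = 2 * c ^ q * besselK q (a * b) := by rw [besselK]; ring

theorem normal_kernel_mul_fGIG (μ β γ δ p y x : ℝ) (hx : 0 < x) :
    1 / sqrt (2 * π * x) * exp (-(y - μ - β * x) ^ 2 / (2 * x)) * fGIG γ δ p x =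
      (γ / δ) ^ p * exp (β * (y - μ)) / (2 * besselK p (γ * δ) * sqrt (2 * π)) *
        (x ^ (p - 1 / 2 - 1) *
          exp (-((β ^ 2 + γ ^ 2) * x + (δ ^ 2 + (y - μ) ^ 2) / x) / 2)) := by
  have h_sqrt : sqrt (2 * π * x) = sqrt (2 * π) * sqrt x := sqrt_mul (by positivity) x
  have h_rpow : x ^ (p - 1 / 2 - 1) = x ^ (p - 1) / sqrt x := by
    rw [sqrt_eq_rpow, ← rpow_sub hx]
    ring_nf
  have h_exp : exp (-(y - μ - β * x) ^ 2 / (2 * x)) * exp (-(γ ^ 2 * x + δ ^ 2 / x) / 2) =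
      exp (β * (y - μ)) * exp (-((β ^ 2 + γ ^ 2) * x + (δ ^ 2 + (y - μ) ^ 2) / x) / 2) := by
    rw [← exp_add, ← exp_add]
    congr 1
    field_simp
    ring
  rw [fGIG, h_sqrt, h_rpow]
  linear_combination (γ / δ) ^ p * x ^ (p - 1) /
    (2 * besselK p (γ * δ) * sqrt (2 * π) * sqrt x) * h_exp

theorem rpow_mul_div_rpow_sub_half_eq (c α m p : ℝ) (hc : 0 ≤ c) (hα : 0 < α) (hm : 0 < m) :
    c ^ p * (m / α) ^ (p - 1 / 2) = sqrt α * (c / α) ^ p / (m ^ 2) ^ ((1 - 2 * p) / 4) := by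
  have h_m : (m ^ 2) ^ ((1 - 2 * p) / 4) = (m ^ (p - 1 / 2))⁻¹ := by
    rw [← rpow_natCast, ← rpow_mul hm.le, ← rpow_neg hm.le]
    ring_nf
  have h_α : sqrt α / α ^ p = (α ^ (p - 1 / 2))⁻¹ := by
    rw [sqrt_eq_rpow, ← rpow_sub hα, ← rpow_neg hα.le]
    ring_nf
  rw [h_m, div_rpow hm.le hα.le, div_rpow hc hα.le, div_inv_eq_mul, div_eq_mul_inv (m ^ _), ← h_α]
  ring

/-- GH density as a normal variance-mean mixture:
`∫₀^∞ (1/√(2πx)) exp(−(y−μ−βx)²/(2x)) f_GIG(x|γ,δ,p) dx = f_GH(y|μ,β,γ,δ,p)`. -/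
theorem gh_density_mixture (μ β γ δ p : ℝ) (hγ : 0 < γ) (hδ : 0 < δ) (y : ℝ) :
    ∫ x in Set.Ioi (0 : ℝ),
        1 / Real.sqrt (2 * Real.pi * x) * Real.exp (-(y - μ - β * x) ^ 2 / (2 * x)) *
          fGIG γ δ p x =
      fGH μ β γ δ p y := by
  have hA : 0 < β ^ 2 + γ ^ 2 := by positivity
  have hM : 0 < δ ^ 2 + (y - μ) ^ 2 := by positivity
  have hα : 0 < sqrt (β ^ 2 + γ ^ 2) := sqrt_pos.mpr hA
  have hm : 0 < sqrt (δ ^ 2 + (y - μ) ^ 2) := sqrt_pos.mpr hM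
  have h_bessel := integral_rpow_mul_exp_eq_besselK (p - 1 / 2) _ _ hα hm
  rw [sq_sqrt hA.le, sq_sqrt hM.le] at h_bessel
  have h_powers := rpow_mul_div_rpow_sub_half_eq (γ / δ) _ _ p (by positivity) hα hm
  rw [sq_sqrt hM.le, div_div, mul_comm δ] at h_powers
  rw [setIntegral_congr_fun measurableSet_Ioi (fun x hx => normal_kernel_mul_fGIG μ β γ δ p y x hx),
    integral_const_mul, h_bessel, fGH, mul_comm δ γ]
  linear_combination exp (β * (y - μ)) *
    besselK (p - 1 / 2) (sqrt (β ^ 2 + γ ^ 2) * sqrt (δ ^ 2 + (y - μ) ^ 2)) /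
    (sqrt (2 * π) * besselK p (γ * δ)) * h_powers
end

section
/- (GH cumulative distribution as a normal-CDF mixture) For all μ ∈ ℝ, β ∈ ℝ, γ, δ > 0, p ∈ ℝ, and every y ∈ ℝ, ∫_{−∞}^{y} f_GH(u|μ,β,γ,δ,p) du = ∫₀^∞ N((y − μ)/√x − β·√x) · f_GIG(x|γ,δ,p) dx, where N denotes the standard normal cumulative distribution function. -/
open MeasureTheory Real Set

/-!
The GH law is the normal mean–variance mixture of `N(μ + β x, x)` over `x ∼ GIG(γ, δ, p)`.
Completing the square in the Gaussian exponent turns the mixture integral at `u` into an integral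
of the kernel `x ^ (p - 3/2) * exp (-(a x + b / x) / 2)` with `a = β² + γ²`, `b = δ² + (u - μ)²`,
and the rescaling `x = t √(b / a)` makes this a Bessel integral, giving `f_GH(u)`. Integrating over
`u ≤ y` and exchanging the order of integration (the integrand is nonnegative) leaves the normal
CDF at `(y - μ - β x) / √x` integrated against the GIG density.
-/

open ProbabilityTheory
open scoped NNReal

noncomputable def gigKernel (a b p x : ℝ) : ℝ := x ^ (p - 1) * exp (-(a * x + b / x) / 2)

lemma besselK_eq_integral_gigKernel (p z : ℝ) :
    besselK p z = 1 / 2 * ∫ t in Ioi 0, gigKernel z z p t := by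
  simp only [besselK, gigKernel]
  congr 2; ext t; ring_nf

lemma gigKernel_nonneg (a b p : ℝ) {x : ℝ} (hx : 0 ≤ x) : 0 ≤ gigKernel a b p x :=
  mul_nonneg (rpow_nonneg hx _) (exp_pos _).le

lemma measurable_gigKernel (a b p : ℝ) : Measurable (gigKernel a b p) := by
  unfold gigKernel; fun_prop

lemma besselK_nonneg (p z : ℝ) : 0 ≤ besselK p z := by
  rw [besselK_eq_integral_gigKernel]
  exact mul_nonneg (by norm_num)
    (setIntegral_nonneg measurableSet_Ioi fun _ hx => gigKernel_nonneg z z p (le_of_lt hx))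

lemma integrableOn_gigKernel_of_pos {a b p : ℝ} (ha : 0 < a) (hb : 0 ≤ b) (hp : 0 < p) :
    IntegrableOn (gigKernel a b p) (Ioi 0) := by
  refine (integrableOn_rpow_mul_exp_neg_mul_rpow (by linarith : -1 < p - 1) one_pos
    (half_pos ha)).mono' (measurable_gigKernel a b p).aestronglyMeasurable ?_
  filter_upwards [ae_restrict_mem measurableSet_Ioi] with x (hx : 0 < x)
  rw [norm_of_nonneg (gigKernel_nonneg a b p hx.le), rpow_one]
  have : 0 ≤ b / x := by positivity
  exact mul_le_mul_of_nonneg_left (exp_le_exp.2 (by linarith)) (rpow_nonneg hx.le _)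

lemma integrableOn_gigKernel_neg_iff (a b p : ℝ) :
    IntegrableOn (gigKernel a b (-p)) (Ioi 0) ↔ IntegrableOn (gigKernel b a p) (Ioi 0) := by
  rw [← integrableOn_Ioi_comp_rpow_iff' _ (by norm_num : (-1 : ℝ) ≠ 0)]
  refine integrableOn_congr_fun (fun x (hx : 0 < x) => ?_) measurableSet_Ioi
  simp only [gigKernel, smul_eq_mul, rpow_neg_one]
  rw [inv_rpow hx.le, ← rpow_neg hx.le, ← mul_assoc, ← rpow_add hx, div_inv_eq_mul]
  congr 2 <;> ring

lemma integrableOn_gigKernel {a b : ℝ} (ha : 0 < a) (hb : 0 < b) (p : ℝ) :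
    IntegrableOn (gigKernel a b p) (Ioi 0) := by
  set q := |p| + 1
  have hq : 0 < q := by positivity
  have hsum := (integrableOn_gigKernel_of_pos ha hb.le hq).add
    ((integrableOn_gigKernel_neg_iff a b q).2 (integrableOn_gigKernel_of_pos hb ha.le hq))
  -- `x ^ (p - 1) ≤ x ^ (q - 1) + x ^ (-q - 1)`, and `x ↦ x⁻¹` handles the second term
  refine hsum.mono' (measurable_gigKernel a b p).aestronglyMeasurable ?_
  filter_upwards [ae_restrict_mem measurableSet_Ioi] with x (hx : 0 < x)
  rw [norm_of_nonneg (gigKernel_nonneg a b p hx.le)]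
  simp only [Pi.add_apply, gigKernel, ← add_mul]
  refine mul_le_mul_of_nonneg_right ?_ (exp_pos _).le
  rcases le_total 1 x with h1 | h1
  · have := rpow_le_rpow_of_exponent_le h1 (by linarith [le_abs_self p] : p - 1 ≤ q - 1)
    linarith [rpow_nonneg hx.le (-q - 1)]
  · have := rpow_le_rpow_of_exponent_ge hx h1 (by linarith [neg_abs_le p] : -q - 1 ≤ p - 1)
    linarith [rpow_nonneg hx.le (q - 1)]

lemma gigKernel_mul_left {a b : ℝ} (ha : 0 < a) (hb : 0 < b) (p : ℝ) {t : ℝ} (ht : 0 < t) :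
    gigKernel a b p (√b / √a * t) =
      (√b / √a) ^ (p - 1) * gigKernel (√a * √b) (√a * √b) p t := by
  have hsa := sqrt_pos.2 ha
  have hsb := sqrt_pos.2 hb
  have hexp : a * (√b / √a * t) + b / (√b / √a * t) = √a * √b * t + √a * √b / t := by
    field_simp
    rw [sq_sqrt ha.le, sq_sqrt hb.le]
    ring
  rw [gigKernel, gigKernel, mul_rpow (by positivity) ht.le, hexp, mul_assoc]

lemma integral_gigKernel {a b : ℝ} (ha : 0 < a) (hb : 0 < b) (p : ℝ) :
    ∫ x in Ioi 0, gigKernel a b p x = 2 * (√b / √a) ^ p * besselK p (√a * √b) := by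
  have hc : 0 < √b / √a := div_pos (sqrt_pos.2 hb) (sqrt_pos.2 ha)
  have hscale := integral_comp_mul_left_Ioi' (gigKernel a b p) 0 hc
  rw [mul_zero, setIntegral_congr_fun measurableSet_Ioi fun t ht => gigKernel_mul_left ha hb p ht,
    integral_const_mul, smul_eq_mul] at hscale
  have hpow : √b / √a * (√b / √a) ^ (p - 1) = (√b / √a) ^ p := by
    rw [mul_comm, ← rpow_add_one hc.ne', sub_add_cancel]
  rw [← hscale, besselK_eq_integral_gigKernel, ← mul_assoc, hpow]
  ring

lemma fGIG_eq_mul_gigKernel (γ δ p : ℝ) :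
    fGIG γ δ p =
      fun x => (γ / δ) ^ p / (2 * besselK p (γ * δ)) * gigKernel (γ ^ 2) (δ ^ 2) p x := by
  ext x; simp only [fGIG, gigKernel]; ring

lemma measurable_fGIG (γ δ p : ℝ) : Measurable (fGIG γ δ p) := by
  unfold fGIG; fun_prop

lemma fGIG_nonneg {γ δ : ℝ} (hγ : 0 ≤ γ) (hδ : 0 ≤ δ) (p : ℝ) {x : ℝ} (hx : 0 ≤ x) :
    0 ≤ fGIG γ δ p x := by
  rw [fGIG_eq_mul_gigKernel]
  have := besselK_nonneg p (γ * δ)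
  exact mul_nonneg (div_nonneg (rpow_nonneg (div_nonneg hγ hδ) _) (by positivity))
    (gigKernel_nonneg _ _ p hx)

lemma integrableOn_fGIG {γ δ : ℝ} (hγ : 0 < γ) (hδ : 0 < δ) (p : ℝ) :
    IntegrableOn (fGIG γ δ p) (Ioi 0) := by
  rw [fGIG_eq_mul_gigKernel]
  exact (integrableOn_gigKernel (by positivity) (by positivity) p).const_mul _

lemma stdNormalPdf_eq_gaussianPDFReal : stdNormalPdf = gaussianPDFReal 0 1 := by
  ext z; simp [stdNormalPdf, gaussianPDFReal, div_eq_inv_mul]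

lemma stdNormalCDF_eq_measureReal (z : ℝ) : stdNormalCDF z = (gaussianReal 0 1).real (Iic z) := by
  rw [measureReal_def, gaussianReal_apply_eq_integral _ one_ne_zero, ENNReal.toReal_ofReal
    (setIntegral_nonneg measurableSet_Iic fun _ _ => gaussianPDFReal_nonneg _ _ _), stdNormalCDF,
    stdNormalPdf_eq_gaussianPDFReal]

lemma stdNormalCDF_le_one (z : ℝ) : stdNormalCDF z ≤ 1 := by
  rw [stdNormalCDF_eq_measureReal]; exact measureReal_le_one

lemma gaussianReal_eq_map_const_add_mul (m : ℝ) (v : ℝ≥0) :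
    gaussianReal m v = (gaussianReal 0 1).map (fun t => m + √v * t) := by
  have hcomp : (fun t => m + √v * t) = (m + ·) ∘ (√v * ·) := rfl
  rw [hcomp, ← Measure.map_map (measurable_const_add m) (measurable_const_mul _),
    gaussianReal_map_const_mul, gaussianReal_map_const_add]
  congr
  · simp
  · ext; simp

lemma setIntegral_Iic_gaussianPDFReal (m : ℝ) {v : ℝ≥0} (hv : v ≠ 0) (y : ℝ) :
    ∫ u in Iic y, gaussianPDFReal m v u = stdNormalCDF ((y - m) / √v) := by
  have hsv : 0 < √(v : ℝ) := sqrt_pos.2 (by positivity)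
  rw [stdNormalCDF_eq_measureReal, ← ENNReal.toReal_ofReal
    (setIntegral_nonneg measurableSet_Iic fun _ _ => gaussianPDFReal_nonneg _ _ _),
    ← gaussianReal_apply_eq_integral _ hv, ← measureReal_def, gaussianReal_eq_map_const_add_mul,
    map_measureReal_apply (by fun_prop) measurableSet_Iic]
  congr
  ext t
  simp only [mem_preimage, mem_Iic, le_div_iff₀ hsv]
  constructor <;> intro h <;> linarith

lemma fGH_constant_eq {A Q g d : ℝ} (hA : 0 < A) (hQ : 0 < Q) (hg : 0 < g) (hd : 0 < d) (p : ℝ) :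
    (g / d) ^ p * (√Q / √A) ^ (p - 1 / 2) = √√A * (g / (√A * d)) ^ p / Q ^ ((1 - 2 * p) / 4) := by
  have hsA := sqrt_pos.2 hA
  have hsQ := sqrt_pos.2 hQ
  rw [rpow_def_of_pos (div_pos hg hd), rpow_def_of_pos (div_pos hsQ hsA),
    rpow_def_of_pos (div_pos hg (mul_pos hsA hd)), rpow_def_of_pos hQ,
    ← exp_log (sqrt_pos.2 hsA), log_div hg.ne' hd.ne', log_div hsQ.ne' hsA.ne',
    log_div hg.ne' (mul_pos hsA hd).ne', log_mul hsA.ne' hd.ne', log_sqrt hsA.le, log_sqrt hA.le,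
    log_sqrt hQ.le, ← exp_add, ← exp_add, ← exp_sub]
  ring_nf

noncomputable def ghMixtureKernel (μ β γ δ p u x : ℝ) : ℝ :=
  gaussianPDFReal (μ + β * x) x.toNNReal u * fGIG γ δ p x

section ghMixtureKernel

variable (μ β : ℝ) {γ δ : ℝ} (p : ℝ)

lemma measurable_ghMixtureKernel : Measurable (Function.uncurry (ghMixtureKernel μ β γ δ p)) :=
  (measurable_uncurry_gaussianPDFReal.comp
      ((by fun_prop : Measurable fun q : ℝ × ℝ => μ + β * q.2).prodMk
        ((measurable_real_toNNReal.comp measurable_snd).prodMk measurable_fst))).mul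
    ((measurable_fGIG γ δ p).comp measurable_snd)

lemma ghMixtureKernel_nonneg (hγ : 0 ≤ γ) (hδ : 0 ≤ δ) (u : ℝ) {x : ℝ} (hx : 0 ≤ x) :
    0 ≤ ghMixtureKernel μ β γ δ p u x :=
  mul_nonneg (gaussianPDFReal_nonneg _ _ _) (fGIG_nonneg hγ hδ p hx)

lemma ghMixtureKernel_eq_mul_gigKernel (u : ℝ) {x : ℝ} (hx : 0 < x) :
    ghMixtureKernel μ β γ δ p u x =
      (γ / δ) ^ p / (2 * besselK p (γ * δ)) * exp (β * (u - μ)) / √(2 * π) *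
        gigKernel (β ^ 2 + γ ^ 2) (δ ^ 2 + (u - μ) ^ 2) (p - 1 / 2) x := by
  have hsx := sqrt_pos.2 hx
  have hpow : x ^ (p - 1) = x ^ (p - 1 / 2 - 1) * √x := by
    rw [sqrt_eq_rpow, ← rpow_add hx]; ring_nf
  have hexp : exp (-(u - (μ + β * x)) ^ 2 / (2 * x)) * exp (-(γ ^ 2 * x + δ ^ 2 / x) / 2) =
      exp (β * (u - μ)) * exp (-((β ^ 2 + γ ^ 2) * x + (δ ^ 2 + (u - μ) ^ 2) / x) / 2) := by
    rw [← exp_add, ← exp_add]; congr 1; field_simp; ring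
  rw [ghMixtureKernel, gaussianPDFReal, Real.coe_toNNReal x hx.le, fGIG, gigKernel, hpow,
    sqrt_mul (by positivity) x]
  calc _ = (γ / δ) ^ p / (2 * besselK p (γ * δ)) / √(2 * π) * x ^ (p - 1 / 2 - 1) *
        (exp (-(u - (μ + β * x)) ^ 2 / (2 * x)) * exp (-(γ ^ 2 * x + δ ^ 2 / x) / 2)) *
        (√x * (√x)⁻¹) := by ring
    _ = _ := by rw [mul_inv_cancel₀ hsx.ne', hexp]; ring

lemma integral_ghMixtureKernel (hγ : 0 < γ) (hδ : 0 < δ) (u : ℝ) :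
    ∫ x in Ioi 0, ghMixtureKernel μ β γ δ p u x = fGH μ β γ δ p u := by
  have hA : 0 < β ^ 2 + γ ^ 2 := by positivity
  have hQ : 0 < δ ^ 2 + (u - μ) ^ 2 := by positivity
  rw [setIntegral_congr_fun measurableSet_Ioi fun x hx =>
      ghMixtureKernel_eq_mul_gigKernel μ β p u hx,
    integral_const_mul, integral_gigKernel hA hQ, fGH, mul_comm δ γ]
  linear_combination 2 * exp (β * (u - μ)) *
    besselK (p - 1 / 2) (√(β ^ 2 + γ ^ 2) * √(δ ^ 2 + (u - μ) ^ 2)) /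
    (2 * √(2 * π) * besselK p (γ * δ)) * fGH_constant_eq hA hQ hγ hδ p

lemma setIntegral_Iic_ghMixtureKernel (y : ℝ) {x : ℝ} (hx : 0 < x) :
    ∫ u in Iic y, ghMixtureKernel μ β γ δ p u x =
      stdNormalCDF ((y - μ) / √x - β * √x) * fGIG γ δ p x := by
  have hsx := sqrt_pos.2 hx
  have harg : (y - (μ + β * x)) / √x = (y - μ) / √x - β * √x := by
    field_simp; rw [sq_sqrt hx.le]; ring
  simp only [ghMixtureKernel]
  rw [integral_mul_const, setIntegral_Iic_gaussianPDFReal _ (by simpa using hx),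
    Real.coe_toNNReal x hx.le, harg]

lemma integrable_ghMixtureKernel (hγ : 0 < γ) (hδ : 0 < δ) (y : ℝ) :
    Integrable (Function.uncurry (ghMixtureKernel μ β γ δ p))
      ((volume.restrict (Iic y)).prod (volume.restrict (Ioi 0))) := by
  have hmeas := measurable_ghMixtureKernel μ β (γ := γ) (δ := δ) p
  rw [integrable_prod_iff' hmeas.aestronglyMeasurable]
  refine ⟨ae_of_all _ fun x => ?_, ?_⟩
  · exact ((integrable_gaussianPDFReal (μ + β * x) x.toNNReal).mul_const (fGIG γ δ p x)).restrict
  refine (integrableOn_fGIG hγ hδ p).mono'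
    hmeas.norm.stronglyMeasurable.integral_prod_left'.aestronglyMeasurable ?_
  filter_upwards [ae_restrict_mem measurableSet_Ioi] with x (hx : 0 < x)
  have hnonneg u : 0 ≤ ghMixtureKernel μ β γ δ p u x :=
    ghMixtureKernel_nonneg μ β p hγ.le hδ.le u hx.le
  simp only [Function.uncurry_apply_pair, norm_of_nonneg (hnonneg _)]
  rw [norm_of_nonneg (setIntegral_nonneg measurableSet_Iic fun u _ => hnonneg u),
    setIntegral_Iic_ghMixtureKernel μ β p y hx]
  exact mul_le_of_le_one_left (fGIG_nonneg hγ.le hδ.le p hx.le) (stdNormalCDF_le_one _)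

end ghMixtureKernel

/-- GH CDF as a normal-CDF mixture:
`∫_{−∞}^y f_GH(u|μ,β,γ,δ,p) du = ∫₀^∞ N((y−μ)/√x − β√x) f_GIG(x|γ,δ,p) dx`. -/
theorem gh_cdf_mixture (μ β γ δ p : ℝ) (hγ : 0 < γ) (hδ : 0 < δ) (y : ℝ) :
    ∫ u in Set.Iic y, fGH μ β γ δ p u =
      ∫ x in Set.Ioi (0 : ℝ),
        stdNormalCDF ((y - μ) / Real.sqrt x - β * Real.sqrt x) * fGIG γ δ p x := by
  calc ∫ u in Iic y, fGH μ β γ δ p u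
      = ∫ u in Iic y, ∫ x in Ioi 0, ghMixtureKernel μ β γ δ p u x :=
        setIntegral_congr_fun measurableSet_Iic fun u _ =>
          (integral_ghMixtureKernel μ β p hγ hδ u).symm
    _ = ∫ x in Ioi 0, ∫ u in Iic y, ghMixtureKernel μ β γ δ p u x :=
        integral_integral_swap (integrable_ghMixtureKernel μ β p hγ hδ y)
    _ = _ := setIntegral_congr_fun measurableSet_Ioi fun x hx =>
        setIntegral_Iic_ghMixtureKernel μ β p y hx
end
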